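/- Assume the nozzle geometry and the 2D CGO function, with s·ε ≤ 1, and let [T₁, T₂] ⊆ [0, T] with T₂ − T₁ = ε². Let α₁, α₄ ∈ (0, 1) and C₁, C₄ > 0. Let H : ℂ → ℂ satisfy |H(z) − H(z′)| ≤ C₁|z − z′|^{α₁} for all z, z′; let u, v : D̄_ε × [T₁, T₂] → ℂ satisfy |u(x,t) − u(x₀,t₀)| ≤ C₄(‖x − x₀‖ + |t − t₀|^{1/2}) and |v(x,t) − v(x₀,t₀)| ≤ C₄(‖x − x₀‖ + |t − t₀|^{1/2}) for all pairs of points; and suppose u((0,0), t₀) = v((0,0), t₀) for some t₀ ∈ [T₁, T₂]. Then there exists a constant C > 0 depending only on μ, λ, T, C₁, C₄ such that |∫_{D_ε} ( [(H(u) − H(v))·u₀](x, T₂) − [(H(u) − H(v))·u₀](x, T₁) ) dx| ≤ C·ε^{1+l+α₁α₄ l₀}. -/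

import Mathlib

noncomputable section

/-- Partial derivative in the first spatial variable. -/
def pd1 (f : ℝ → ℝ → ℝ → ℂ) (x₁ x₂ t : ℝ) : ℂ := deriv (fun y => f y x₂ t) x₁

/-- Partial derivative in the second spatial variable. -/
def pd2 (f : ℝ → ℝ → ℝ → ℂ) (x₁ x₂ t : ℝ) : ℂ := deriv (fun y => f x₁ y t) x₂

/-- Partial derivative in time. -/
def pdt (f : ℝ → ℝ → ℝ → ℂ) (x₁ x₂ t : ℝ) : ℂ := deriv (fun τ => f x₁ x₂ τ) t

/-- Spatial Laplacian `Δ = ∂₁² + ∂₂²`. -/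
def lap (f : ℝ → ℝ → ℝ → ℂ) (x₁ x₂ t : ℝ) : ℂ :=
  pd1 (pd1 f) x₁ x₂ t + pd2 (pd2 f) x₁ x₂ t

/-- The 2D complex geometric optics function
`u₀(x,t) = exp(μ^{-1/2}((s d₁ + i√(s²+λ) d₂) x₁ + (s d₂ − i√(s²+λ) d₁) x₂) + λ t)`. -/
def cgo2 (μ lam s d₁ d₂ : ℝ) (x₁ x₂ t : ℝ) : ℂ :=
  Complex.exp (((Real.sqrt μ : ℝ) : ℂ)⁻¹ *
      (((s : ℂ) * (d₁ : ℂ) + Complex.I * ((Real.sqrt (s ^ 2 + lam) : ℝ) : ℂ) * (d₂ : ℂ)) *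
          (x₁ : ℂ) +
        ((s : ℂ) * (d₂ : ℂ) - Complex.I * ((Real.sqrt (s ^ 2 + lam) : ℝ) : ℂ) * (d₁ : ℂ)) *
          (x₂ : ℂ)) +
    (lam : ℂ) * (t : ℂ))

/-- The parabolic distance `ρ = ‖x − y‖ + |t − τ|^{1/2}` in two space dimensions. -/
def prho (x₁ x₂ t y₁ y₂ τ : ℝ) : ℝ :=
  Real.sqrt ((x₁ - y₁) ^ 2 + (x₂ - y₂) ^ 2) + Real.sqrt |t - τ|

/-- Euclidean norm of the spatial gradient of `w`. -/
def gradNorm (w : ℝ → ℝ → ℝ → ℂ) (x₁ x₂ t : ℝ) : ℝ :=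
  Real.sqrt (‖pd1 w x₁ x₂ t‖ ^ 2 + ‖pd2 w x₁ x₂ t‖ ^ 2)

/-- The closed nozzle space–time cylinder
`D̄_ε × [T₁,T₂]`, `D_ε = {0 ≤ x₁ ≤ ε^l, γ(x₁) ≤ x₂ ≤ γ(x₁)+ε}`. -/
def nozzleCyl (ε l T₁ T₂ : ℝ) (γ : ℝ → ℝ) : Set (ℝ × ℝ × ℝ) :=
  {p : ℝ × ℝ × ℝ | p.1 ∈ Set.Icc 0 (ε ^ l) ∧ p.2.1 ∈ Set.Icc (γ p.1) (γ p.1 + ε) ∧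
    p.2.2 ∈ Set.Icc T₁ T₂}

/-- Parabolic `C^{1,α}` bound with constant `C` on the set `S`. -/
structure ParabolicC1 (w : ℝ → ℝ → ℝ → ℂ) (S : Set (ℝ × ℝ × ℝ)) (C α : ℝ) : Prop where
  bdd : ∀ p ∈ S, ‖w p.1 p.2.1 p.2.2‖ ≤ C
  grad_bdd : ∀ p ∈ S, gradNorm w p.1 p.2.1 p.2.2 ≤ C
  time_bdd : ∀ p ∈ S, ‖pdt w p.1 p.2.1 p.2.2‖ ≤ C
  lip : ∀ p ∈ S, ∀ q ∈ S,
    ‖w p.1 p.2.1 p.2.2 - w q.1 q.2.1 q.2.2‖ ≤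
      C * prho p.1 p.2.1 p.2.2 q.1 q.2.1 q.2.2
  grad_holder : ∀ p ∈ S, ∀ q ∈ S,
    Real.sqrt (‖pd1 w p.1 p.2.1 p.2.2 - pd1 w q.1 q.2.1 q.2.2‖ ^ 2 +
        ‖pd2 w p.1 p.2.1 p.2.2 - pd2 w q.1 q.2.1 q.2.2‖ ^ 2) ≤
      C * prho p.1 p.2.1 p.2.2 q.1 q.2.1 q.2.2 ^ α
  taylor : ∀ p ∈ S, ∀ q ∈ S,
    ‖w p.1 p.2.1 p.2.2 - w q.1 q.2.1 q.2.2
        - pd1 w q.1 q.2.1 q.2.2 * ((p.1 - q.1 : ℝ) : ℂ)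
        - pd2 w q.1 q.2.1 q.2.2 * ((p.2.1 - q.2.1 : ℝ) : ℂ)
        - pdt w q.1 q.2.1 q.2.2 * ((p.2.2 - q.2.2 : ℝ) : ℂ)‖ ≤
      C * prho p.1 p.2.1 p.2.2 q.1 q.2.1 q.2.2 ^ (1 + α)

/-- `w` is (jointly) continuously differentiable in `(x,t)` on the set `S`. -/
structure SmoothC1 (w : ℝ → ℝ → ℝ → ℂ) (S : Set (ℝ × ℝ × ℝ)) : Prop where
  cont : ContinuousOn (fun p : ℝ × ℝ × ℝ => w p.1 p.2.1 p.2.2) S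
  jdiff : ∀ p ∈ S, DifferentiableAt ℝ (fun q : ℝ × ℝ × ℝ => w q.1 q.2.1 q.2.2) p
  cont1 : ContinuousOn (fun p : ℝ × ℝ × ℝ => pd1 w p.1 p.2.1 p.2.2) S
  cont2 : ContinuousOn (fun p : ℝ × ℝ × ℝ => pd2 w p.1 p.2.1 p.2.2) S
  contt : ContinuousOn (fun p : ℝ × ℝ × ℝ => pdt w p.1 p.2.1 p.2.2) S

/-!
Every point of the nozzle cylinder lies within parabolic distance `ε^l + 3ε ≤ 4ε^{l₀}` of the
base point, where `u = v`; hence `|u − v| ≤ 8C₄ε^{l₀}` and, by Hölder continuity of `H`,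
`|H(u) − H(v)| ≤ C₁ max(1, 8C₄) ε^{α₁l₀} ≤ C₁ max(1, 8C₄) ε^{α₁α₄l₀}`. Since `d₁, d₂ < 0` and
`sε ≤ 1`, the CGO weight is bounded by `exp(μ^{-1/2} + λT)` there, and the domain has area
`ε^{1+l}`.
-/

open Set

lemma norm_cgo2 (μ lam s d₁ d₂ x₁ x₂ t : ℝ) :
    ‖cgo2 μ lam s d₁ d₂ x₁ x₂ t‖
      = Real.exp ((Real.sqrt μ)⁻¹ * (s * d₁ * x₁ + s * d₂ * x₂) + lam * t) := by
  rw [cgo2, Complex.norm_exp, ← Complex.ofReal_inv]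
  congr 1
  simp

lemma norm_cgo2_le {μ lam s d₁ d₂ x₁ x₂ t ε T : ℝ} (hlam : 0 ≤ lam) (hs : 0 ≤ s) (hε : 0 ≤ ε)
    (hd₁ : d₁ ≤ 0) (hd₂ : d₂ ≤ 0) (hd₂' : -1 ≤ d₂) (hx₁ : 0 ≤ x₁) (hx₂ : -ε ≤ x₂)
    (hsε : s * ε ≤ 1) (ht : t ≤ T) :
    ‖cgo2 μ lam s d₁ d₂ x₁ x₂ t‖ ≤ Real.exp ((Real.sqrt μ)⁻¹ + lam * T) := by
  rw [norm_cgo2, Real.exp_le_exp]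
  have hx : s * d₁ * x₁ + s * d₂ * x₂ ≤ 1 := by
    have h₁ : s * d₁ * x₁ ≤ 0 := mul_nonpos_of_nonpos_of_nonneg (by nlinarith) hx₁
    have h₂ : d₂ * x₂ ≤ ε := by nlinarith
    nlinarith
  have hμ : 0 ≤ (Real.sqrt μ)⁻¹ := by positivity
  nlinarith

lemma rpow_add_three_mul_le {ε : ℝ} (l : ℝ) (hε : 0 < ε) (hε₁ : ε ≤ 1) :
    ε ^ l + 3 * ε ≤ 4 * ε ^ min l 1 := by
  have hl : ε ^ l ≤ ε ^ min l 1 := Real.rpow_le_rpow_of_exponent_ge hε hε₁ (min_le_left l 1)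
  have h₁ : ε ≤ ε ^ min l 1 := by
    simpa using Real.rpow_le_rpow_of_exponent_ge hε hε₁ (min_le_right l 1)
  linarith

lemma mul_rpow_le_max_one_mul_rpow {K ε a α e : ℝ} (hK : 0 ≤ K) (hε : 0 < ε) (hε₁ : ε ≤ 1)
    (hα : α ∈ Icc (0 : ℝ) 1) (he : e ≤ a * α) :
    (K * ε ^ a) ^ α ≤ max 1 K * ε ^ e := by
  rw [Real.mul_rpow hK (by positivity), ← Real.rpow_mul hε.le]
  have hK' : K ^ α ≤ max 1 K :=
    calc K ^ α ≤ max 1 K ^ α := Real.rpow_le_rpow hK (le_max_right 1 K) hα.1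
      _ ≤ max 1 K ^ (1 : ℝ) := Real.rpow_le_rpow_of_exponent_le (le_max_left 1 K) hα.2
      _ = max 1 K := Real.rpow_one _
  exact mul_le_mul hK' (Real.rpow_le_rpow_of_exponent_ge hε hε₁ he) (by positivity)
    (by positivity)

lemma norm_integral_integral_le_of_norm_le_const {E : Type*} [NormedAddCommGroup E]
    [NormedSpace ℝ E] {f : ℝ → ℝ → E} {g : ℝ → ℝ} {a b c B : ℝ} (hab : a ≤ b) (hc : 0 ≤ c)
    (hf : ∀ x ∈ Ioc a b, ∀ y ∈ Ioc (g x) (g x + c), ‖f x y‖ ≤ B) :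
    ‖∫ x in a..b, ∫ y in g x..g x + c, f x y‖ ≤ B * c * (b - a) := by
  have hinner : ∀ x ∈ uIoc a b, ‖∫ y in g x..g x + c, f x y‖ ≤ B * c := by
    intro x hx
    rw [uIoc_of_le hab] at hx
    have hfx : ∀ y ∈ uIoc (g x) (g x + c), ‖f x y‖ ≤ B := by
      rw [uIoc_of_le (by linarith)]
      exact hf x hx
    simpa [abs_of_nonneg hc] using intervalIntegral.norm_integral_le_of_norm_le_const hfx
  simpa [abs_of_nonneg (sub_nonneg.mpr hab)] using
    intervalIntegral.norm_integral_le_of_norm_le_const hinner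

section Nozzle

variable {ε l T₁ T₂ t₀ : ℝ} {γ : ℝ → ℝ}

lemma zero_mem_nozzleCyl (hε : 0 < ε) (hγ₀ : γ 0 = 0) (ht₀ : t₀ ∈ Icc T₁ T₂) :
    ((0 : ℝ), (0 : ℝ), t₀) ∈ nozzleCyl ε l T₁ T₂ γ :=
  ⟨⟨le_rfl, by positivity⟩, ⟨by simp [hγ₀], by simp [hγ₀, hε.le]⟩, ht₀⟩

lemma prho_zero_le_of_mem_nozzleCyl {p : ℝ × ℝ × ℝ} (hε : 0 < ε)
    (hp : p ∈ nozzleCyl ε l T₁ T₂ γ) (hγ : |γ p.1| ≤ ε) (ht₀ : t₀ ∈ Icc T₁ T₂)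
    (hT : T₂ - T₁ = ε ^ 2) :
    prho p.1 p.2.1 p.2.2 0 0 t₀ ≤ ε ^ l + 3 * ε := by
  obtain ⟨⟨hx₁, hx₁'⟩, ⟨hx₂, hx₂'⟩, ht, ht'⟩ := hp
  obtain ⟨hγ, hγ'⟩ := abs_le.mp hγ
  have hspace : Real.sqrt ((p.1 - 0) ^ 2 + (p.2.1 - 0) ^ 2) ≤ ε ^ l + 2 * ε := by
    rw [Real.sqrt_le_left (by positivity)]
    have : |p.2.1| ≤ 2 * ε := abs_le.mpr ⟨by linarith, by linarith⟩
    nlinarith [sq_abs p.2.1, abs_nonneg p.2.1]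
  have htime : Real.sqrt |p.2.2 - t₀| ≤ ε := by
    rw [Real.sqrt_le_left hε.le, abs_le]
    constructor <;> linarith [ht₀.1, ht₀.2]
  unfold prho
  linarith

lemma norm_holder_sub_le_of_mem_nozzleCyl {C₁ C₄ α₁ α₄ : ℝ} {H : ℂ → ℂ}
    {u v : ℝ → ℝ → ℝ → ℂ} {p : ℝ × ℝ × ℝ} (hC₁ : 0 ≤ C₁) (hC₄ : 0 ≤ C₄)
    (hε : ε ∈ Ioo (0 : ℝ) 1) (hl : 0 ≤ l) (hγ₀ : γ 0 = 0) (hγ : |γ p.1| ≤ ε)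
    (ht₀ : t₀ ∈ Icc T₁ T₂) (hT : T₂ - T₁ = ε ^ 2) (hα₁ : α₁ ∈ Icc (0 : ℝ) 1) (hα₄ : α₄ ≤ 1)
    (hH : ∀ z z', ‖H z - H z'‖ ≤ C₁ * ‖z - z'‖ ^ α₁)
    (hu : ∀ p ∈ nozzleCyl ε l T₁ T₂ γ, ∀ q ∈ nozzleCyl ε l T₁ T₂ γ,
      ‖u p.1 p.2.1 p.2.2 - u q.1 q.2.1 q.2.2‖ ≤ C₄ * prho p.1 p.2.1 p.2.2 q.1 q.2.1 q.2.2)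
    (hv : ∀ p ∈ nozzleCyl ε l T₁ T₂ γ, ∀ q ∈ nozzleCyl ε l T₁ T₂ γ,
      ‖v p.1 p.2.1 p.2.2 - v q.1 q.2.1 q.2.2‖ ≤ C₄ * prho p.1 p.2.1 p.2.2 q.1 q.2.1 q.2.2)
    (huv : u 0 0 t₀ = v 0 0 t₀) (hp : p ∈ nozzleCyl ε l T₁ T₂ γ) :
    ‖H (u p.1 p.2.1 p.2.2) - H (v p.1 p.2.1 p.2.2)‖
      ≤ C₁ * max 1 (8 * C₄) * ε ^ (α₁ * α₄ * min l 1) := by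
  obtain ⟨hε₀, hε₁⟩ := hε
  have hq := zero_mem_nozzleCyl (l := l) hε₀ hγ₀ ht₀
  have hρ : prho p.1 p.2.1 p.2.2 0 0 t₀ ≤ 4 * ε ^ min l 1 :=
    (prho_zero_le_of_mem_nozzleCyl hε₀ hp hγ ht₀ hT).trans (rpow_add_three_mul_le l hε₀ hε₁.le)
  have huv' : ‖u p.1 p.2.1 p.2.2 - v p.1 p.2.1 p.2.2‖ ≤ 8 * C₄ * ε ^ min l 1 :=
    calc ‖u p.1 p.2.1 p.2.2 - v p.1 p.2.1 p.2.2‖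
        = ‖(u p.1 p.2.1 p.2.2 - u 0 0 t₀) - (v p.1 p.2.1 p.2.2 - v 0 0 t₀)‖ := by
          rw [huv, sub_sub_sub_cancel_right]
      _ ≤ C₄ * prho p.1 p.2.1 p.2.2 0 0 t₀ + C₄ * prho p.1 p.2.1 p.2.2 0 0 t₀ :=
          (norm_sub_le _ _).trans (add_le_add (hu p hp _ hq) (hv p hp _ hq))
      _ ≤ 8 * C₄ * ε ^ min l 1 := by nlinarith
  have hexp : α₁ * α₄ * min l 1 ≤ min l 1 * α₁ := by
    have : 0 ≤ α₁ * min l 1 := mul_nonneg hα₁.1 (le_min hl zero_le_one)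
    nlinarith
  calc ‖H (u p.1 p.2.1 p.2.2) - H (v p.1 p.2.1 p.2.2)‖
      ≤ C₁ * (8 * C₄ * ε ^ min l 1) ^ α₁ :=
        (hH _ _).trans (mul_le_mul_of_nonneg_left
          (Real.rpow_le_rpow (norm_nonneg _) huv' hα₁.1) hC₁)
    _ ≤ C₁ * (max 1 (8 * C₄) * ε ^ (α₁ * α₄ * min l 1)) := by
        gcongr
        exact mul_rpow_le_max_one_mul_rpow (by positivity) hε₀ hε₁.le hα₁ hexp
    _ = C₁ * max 1 (8 * C₄) * ε ^ (α₁ * α₄ * min l 1) := by ring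

end Nozzle

theorem temporal_boundary_estimate_I5_general
    (μ lam T C₁ C₄ : ℝ) (hlam : 0 < lam)
    (hC₁ : 0 < C₁) (hC₄ : 0 < C₄) :
    ∃ C > 0, ∀ (ε l s d₁ d₂ T₁ T₂ α₁ α₄ t₀ : ℝ) (γ : ℝ → ℝ)
      (H : ℂ → ℂ) (u v : ℝ → ℝ → ℝ → ℂ),
      ε ∈ Set.Ioo (0:ℝ) 1 → 0 < l →
      ContDiffOn ℝ 2 γ (Set.Icc 0 (ε ^ l)) → γ 0 = 0 →
      derivWithin γ (Set.Icc 0 (ε ^ l)) 0 = 0 →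
      (∀ x ∈ Set.Icc (0:ℝ) (ε ^ l), |γ x| ≤ ε) →
      d₁ < 0 → d₂ < 0 → d₁ ^ 2 + d₂ ^ 2 = 1 →
      0 < s → s * ε ≤ 1 →
      0 ≤ T₁ → T₂ ≤ T → T₂ - T₁ = ε ^ 2 →
      α₁ ∈ Set.Ioo (0:ℝ) 1 → α₄ ∈ Set.Ioo (0:ℝ) 1 → t₀ ∈ Set.Icc T₁ T₂ →
      (∀ z z', ‖H z - H z'‖ ≤ C₁ * ‖z - z'‖ ^ α₁) →
      (∀ p ∈ nozzleCyl ε l T₁ T₂ γ, ∀ q ∈ nozzleCyl ε l T₁ T₂ γ,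
        ‖u p.1 p.2.1 p.2.2 - u q.1 q.2.1 q.2.2‖
          ≤ C₄ * prho p.1 p.2.1 p.2.2 q.1 q.2.1 q.2.2) →
      (∀ p ∈ nozzleCyl ε l T₁ T₂ γ, ∀ q ∈ nozzleCyl ε l T₁ T₂ γ,
        ‖v p.1 p.2.1 p.2.2 - v q.1 q.2.1 q.2.2‖
          ≤ C₄ * prho p.1 p.2.1 p.2.2 q.1 q.2.1 q.2.2) →
      u 0 0 t₀ = v 0 0 t₀ →
      ‖(∫ x₁ in (0:ℝ)..(ε ^ l), ∫ x₂ in (γ x₁)..(γ x₁ + ε),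
            ((H (u x₁ x₂ T₂) - H (v x₁ x₂ T₂)) * cgo2 μ lam s d₁ d₂ x₁ x₂ T₂
              - (H (u x₁ x₂ T₁) - H (v x₁ x₂ T₁)) * cgo2 μ lam s d₁ d₂ x₁ x₂ T₁))‖
        ≤ C * ε ^ (1 + l + α₁ * α₄ * min l 1) := by
  set K := Real.exp ((Real.sqrt μ)⁻¹ + lam * T) * (C₁ * max 1 (8 * C₄))
  refine ⟨2 * K, by positivity, ?_⟩
  intro ε l s d₁ d₂ T₁ T₂ α₁ α₄ t₀ γ H u v hε hl _ hγ₀ _ hγ hd₁ hd₂ hd hs hsε _ hT₂ hT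
    hα₁ hα₄ ht₀ hH hu hv huv
  have hd₂' : -1 ≤ d₂ := by nlinarith
  have hterm : ∀ x₁ ∈ Ioc 0 (ε ^ l), ∀ x₂ ∈ Ioc (γ x₁) (γ x₁ + ε), ∀ t ∈ Icc T₁ T₂,
      ‖(H (u x₁ x₂ t) - H (v x₁ x₂ t)) * cgo2 μ lam s d₁ d₂ x₁ x₂ t‖
        ≤ K * ε ^ (α₁ * α₄ * min l 1) := by
    intro x₁ hx₁ x₂ hx₂ t ht
    have hγx₁ := hγ x₁ (Ioc_subset_Icc_self hx₁)
    rw [norm_mul, mul_comm, mul_assoc]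
    refine mul_le_mul (norm_cgo2_le hlam.le hs.le hε.1.le hd₁.le hd₂.le hd₂' hx₁.1.le
      (by linarith [(abs_le.mp hγx₁).1, hx₂.1]) hsε (ht.2.trans hT₂)) ?_
      (norm_nonneg _) (Real.exp_pos _).le
    exact norm_holder_sub_le_of_mem_nozzleCyl (p := (x₁, x₂, t)) hC₁.le hC₄.le hε hl.le hγ₀
      hγx₁ ht₀ hT (Ioo_subset_Icc_self hα₁) hα₄.2.le hH hu hv huv
      ⟨Ioc_subset_Icc_self hx₁, Ioc_subset_Icc_self hx₂, ht⟩
  have hT₁₂ : T₁ ≤ T₂ := by nlinarith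
  calc _ ≤ 2 * (K * ε ^ (α₁ * α₄ * min l 1)) * ε * (ε ^ l - 0) :=
        norm_integral_integral_le_of_norm_le_const (Real.rpow_nonneg hε.1.le l) hε.1.le
          fun x₁ hx₁ x₂ hx₂ => (norm_sub_le _ _).trans (by
            linarith [hterm x₁ hx₁ x₂ hx₂ T₂ ⟨hT₁₂, le_rfl⟩,
              hterm x₁ hx₁ x₂ hx₂ T₁ ⟨le_rfl, hT₁₂⟩])
    _ = 2 * K * ε ^ (1 + l + α₁ * α₄ * min l 1) := by
        rw [Real.rpow_add hε.1, Real.rpow_add hε.1, Real.rpow_one]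
        ring

/-- **Temporal boundary-term estimate (quantitative Lemma 3.7).**
If `H` is `α₁`-Hölder (constant `C₁`), `u, v` are parabolically Lipschitz (constant `C₄`)
on `D̄_ε × [T₁,T₂]` and `u = v` at the base point `((0,0), t₀)`, then
`|∫_{D_ε} (H(u) − H(v)) u₀ |_{T₁}^{T₂} dx| ≤ C ε^{1+l+α₁α₄l₀}`,
with `C` depending only on `μ, λ, T, C₁, C₄`. -/
theorem temporal_boundary_estimate_I5
    (μ lam T C₁ C₄ : ℝ) (hμ : 0 < μ) (hlam : 0 < lam) (hT : 0 < T)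
    (hC₁ : 0 < C₁) (hC₄ : 0 < C₄) :
    ∃ C > 0, ∀ (ε l s d₁ d₂ T₁ T₂ α₁ α₄ t₀ : ℝ) (γ : ℝ → ℝ)
      (H : ℂ → ℂ) (u v : ℝ → ℝ → ℝ → ℂ),
      ε ∈ Set.Ioo (0:ℝ) 1 → 0 < l →
      ContDiffOn ℝ 2 γ (Set.Icc 0 (ε ^ l)) → γ 0 = 0 →
      derivWithin γ (Set.Icc 0 (ε ^ l)) 0 = 0 →
      (∀ x ∈ Set.Icc (0:ℝ) (ε ^ l), |γ x| ≤ ε) →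
      d₁ < 0 → d₂ < 0 → d₁ ^ 2 + d₂ ^ 2 = 1 →
      0 < s → s * ε ≤ 1 →
      0 ≤ T₁ → T₂ ≤ T → T₂ - T₁ = ε ^ 2 →
      α₁ ∈ Set.Ioo (0:ℝ) 1 → α₄ ∈ Set.Ioo (0:ℝ) 1 → t₀ ∈ Set.Icc T₁ T₂ →
      (∀ z z', ‖H z - H z'‖ ≤ C₁ * ‖z - z'‖ ^ α₁) →
      (∀ p ∈ nozzleCyl ε l T₁ T₂ γ, ∀ q ∈ nozzleCyl ε l T₁ T₂ γ,
        ‖u p.1 p.2.1 p.2.2 - u q.1 q.2.1 q.2.2‖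
          ≤ C₄ * prho p.1 p.2.1 p.2.2 q.1 q.2.1 q.2.2) →
      (∀ p ∈ nozzleCyl ε l T₁ T₂ γ, ∀ q ∈ nozzleCyl ε l T₁ T₂ γ,
        ‖v p.1 p.2.1 p.2.2 - v q.1 q.2.1 q.2.2‖
          ≤ C₄ * prho p.1 p.2.1 p.2.2 q.1 q.2.1 q.2.2) →
      u 0 0 t₀ = v 0 0 t₀ →
      ‖(∫ x₁ in (0:ℝ)..(ε ^ l), ∫ x₂ in (γ x₁)..(γ x₁ + ε),
            ((H (u x₁ x₂ T₂) - H (v x₁ x₂ T₂)) * cgo2 μ lam s d₁ d₂ x₁ x₂ T₂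
              - (H (u x₁ x₂ T₁) - H (v x₁ x₂ T₁)) * cgo2 μ lam s d₁ d₂ x₁ x₂ T₁))‖
        ≤ C * ε ^ (1 + l + α₁ * α₄ * min l 1) :=
  temporal_boundary_estimate_I5_general μ lam T C₁ C₄ hlam hC₁ hC₄
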